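/- Let (b_n)_{n≥0} and (λ_n)_{n≥0} be sequences of positive integers with b_n → ∞, λ_n → ∞, and log b_{n+1} / (∑_{k=0}^{n} λ_k log b_k) → ∞. Then the quasi-periodic continued fraction ξ = [0; b₀^{λ₀}, b₁^{λ₁}, b₂^{λ₂}, …] (where each bₖ appears λₖ consecutive times as a partial quotient) is a Liouville number, i.e. w₁(ξ) = +∞. -/

import Mathlib

/-!
The convergents `p_N / q_N` of `ξ` satisfy `0 < |ξ - p_N / q_N| ≤ 1 / (q_N q_{N+1})` and
`q_{N+1} ≥ a_{N+1} q_N`, so `ξ` is a Liouville number as soon as, for every `n`, infinitely many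
`N` have `q_N ^ n ≤ a_{N+1}`. Take `N` to be the end of the `j`-th block, so that
`a_{N+1} = b_{j+1}`. Since `q_N ≤ ∏_{1 ≤ i ≤ N} 2 a_i`, we get
`log q_N ≤ ∑_{k ≤ j} λ_k log (2 b_k) = O(∑_{k ≤ j} λ_k log b_k)`, which the growth hypothesis
makes `o(log b_{j+1})`.
-/

open Filter Finset Polynomial

/-- Numerators of the convergents of the continued fraction `[a 0; a 1, a 2, …]`. -/
def convP (a : ℕ → ℤ) : ℕ → ℤ
  | 0 => a 0
  | 1 => a 1 * a 0 + 1
  | (n+2) => a (n+2) * convP a (n+1) + convP a n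

/-- Denominators of the convergents of the continued fraction `[a 0; a 1, a 2, …]`. -/
def convQ (a : ℕ → ℤ) : ℕ → ℤ
  | 0 => 1
  | 1 => a 1
  | (n+2) => a (n+2) * convQ a (n+1) + convQ a n

/-- `ξ` is the value of the continued fraction with partial quotients `a`,
i.e. the limit of its convergents. -/
def IsCFValue (a : ℕ → ℤ) (ξ : ℝ) : Prop :=
  Filter.Tendsto (fun n => (convP a n : ℝ) / (convQ a n : ℝ)) Filter.atTop (nhds ξ)

open scoped Topology

noncomputable def convergent (a : ℕ → ℤ) (n : ℕ) : ℝ := convP a n / convQ a n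

theorem mem_uIcc_of_tendsto_of_sub_eq_neg_one_pow_mul {c d : ℕ → ℝ} {ξ : ℝ} (hd : Antitone d)
    (hc : ∀ n, c (n + 1) - c n = (-1) ^ n * d n) (hξ : Tendsto c atTop (𝓝 ξ)) (n : ℕ) :
    ξ ∈ Set.uIcc (c n) (c (n + 1)) := by
  have hsum (m : ℕ) : c m = c 0 + ∑ i ∈ range m, (-1) ^ i * d i := by
    rw [← Finset.sum_congr rfl fun i _ => hc i, Finset.sum_range_sub]; ring
  have hlim : Tendsto (fun m => ∑ i ∈ range m, (-1) ^ i * d i) atTop (𝓝 (ξ - c 0)) :=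
    (hξ.sub_const (c 0)).congr fun m => by rw [hsum m]; ring
  have heven (k : ℕ) : c (2 * k) ≤ ξ := by
    linarith [hsum (2 * k), hd.alternating_series_le_tendsto hlim k]
  have hodd (k : ℕ) : ξ ≤ c (2 * k + 1) := by
    linarith [hsum (2 * k + 1), hd.tendsto_le_alternating_series hlim k]
  obtain ⟨k, rfl | rfl⟩ := Nat.even_or_odd' n
  · exact Set.mem_uIcc.2 (Or.inl ⟨heven k, hodd k⟩)
  · exact Set.mem_uIcc.2 (Or.inr ⟨heven (k + 1), hodd k⟩)

theorem exists_lt_le_succ_of_le {S : ℕ → ℕ} (h0 : S 0 = 0) {m : ℕ} (hm : 0 < m) :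
    ∀ {n : ℕ}, m ≤ S n → ∃ j, S j < m ∧ m ≤ S (j + 1)
  | 0, hmn => by omega
  | n + 1, hmn => by
    by_cases h : m ≤ S n
    · exact exists_lt_le_succ_of_le h0 hm h
    · exact ⟨n, by omega, hmn⟩

theorem sum_range_le_sum_range_of_nonpos {f : ℕ → ℝ} {K j : ℕ} (hf : ∀ k ≥ K, f k ≤ 0)
    (hj : K ≤ j) : ∑ k ∈ range j, f k ≤ ∑ k ∈ range K, f k := by
  rw [← sum_range_add_sum_Ico f hj]
  exact add_le_of_nonpos_right (sum_nonpos fun k hk => hf k (mem_Ico.1 hk).1)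

theorem convP_mul_convQ_sub_convP_mul_convQ (a : ℕ → ℤ) (n : ℕ) :
    convP a (n + 1) * convQ a n - convP a n * convQ a (n + 1) = (-1) ^ n := by
  induction n with
  | zero => simp [convP, convQ]; ring
  | succ n ih =>
    rw [convP, convQ, pow_succ, ← ih]
    ring

section Convergents

variable {a : ℕ → ℤ} (ha : ∀ i, 1 ≤ a (i + 1))
include ha

theorem one_le_convQ (n : ℕ) : 1 ≤ convQ a n := by
  induction n using Nat.twoStepInduction with
  | zero => simp [convQ]
  | one => simpa [convQ] using ha 0
  | more n h0 h1 =>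
    rw [convQ]
    nlinarith [ha (n + 1)]

theorem convQ_pos (n : ℕ) : 0 < convQ a n :=
  zero_lt_one.trans_le (one_le_convQ ha n)

theorem mul_convQ_le_convQ_succ (n : ℕ) : a (n + 1) * convQ a n ≤ convQ a (n + 1) := by
  cases n with
  | zero => simp [convQ]
  | succ n =>
    rw [convQ.eq_3]
    linarith [one_le_convQ ha n]

theorem convQ_le_convQ_succ (n : ℕ) : convQ a n ≤ convQ a (n + 1) :=
  le_trans (le_mul_of_one_le_left (by linarith [one_le_convQ ha n]) (ha n))
    (mul_convQ_le_convQ_succ ha n)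

theorem convQ_succ_le (n : ℕ) : convQ a (n + 1) ≤ 2 * a (n + 1) * convQ a n := by
  cases n with
  | zero => simp [convQ]; linarith [ha 0]
  | succ n =>
    rw [convQ.eq_3]
    nlinarith [convQ_le_convQ_succ ha n, one_le_convQ ha (n + 1), ha (n + 1)]

theorem convQ_le_prod (n : ℕ) : convQ a n ≤ ∏ i ∈ range n, 2 * a (i + 1) := by
  induction n with
  | zero => simp [convQ]
  | succ n ih =>
    rw [prod_range_succ, mul_comm]
    exact (convQ_succ_le ha n).trans
      (mul_le_mul_of_nonneg_left ih (by linarith [ha n]))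

theorem natCast_le_convQ (n : ℕ) : (n : ℤ) ≤ convQ a n := by
  induction n using Nat.twoStepInduction with
  | zero => simp [convQ]
  | one => simpa [convQ] using ha 0
  | more n _ h1 =>
    rw [convQ]
    push_cast at h1 ⊢
    nlinarith [ha (n + 1), one_le_convQ ha n]

theorem convQ_mul_convQ_succ_pos (n : ℕ) : (0 : ℝ) < convQ a n * convQ a (n + 1) :=
  mul_pos (Int.cast_pos.2 (convQ_pos ha n)) (Int.cast_pos.2 (convQ_pos ha (n + 1)))

theorem convergent_succ_sub_convergent (n : ℕ) :
    convergent a (n + 1) - convergent a n =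
      (-1) ^ n * ((convQ a n : ℝ) * convQ a (n + 1))⁻¹ := by
  have hdet := congrArg (fun z : ℤ => (z : ℝ)) (convP_mul_convQ_sub_convP_mul_convQ a n)
  push_cast at hdet
  have h0 : (convQ a n : ℝ) ≠ 0 := Int.cast_ne_zero.2 (convQ_pos ha n).ne'
  have h1 : (convQ a (n + 1) : ℝ) ≠ 0 := Int.cast_ne_zero.2 (convQ_pos ha (n + 1)).ne'
  rw [convergent, convergent]
  field_simp
  linear_combination hdet

theorem abs_convergent_succ_sub_convergent (n : ℕ) :
    |convergent a (n + 1) - convergent a n| = ((convQ a n : ℝ) * convQ a (n + 1))⁻¹ := by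
  rw [convergent_succ_sub_convergent ha, abs_mul, abs_neg_one_pow, one_mul,
    abs_of_pos (inv_pos.2 (convQ_mul_convQ_succ_pos ha n))]

theorem antitone_inv_convQ_mul_convQ_succ :
    Antitone fun n => ((convQ a n : ℝ) * convQ a (n + 1))⁻¹ := by
  refine antitone_nat_of_succ_le fun n => inv_anti₀ (convQ_mul_convQ_succ_pos ha n) ?_
  have h0 : (0 : ℝ) ≤ convQ a (n + 1) := Int.cast_nonneg_iff.2 (convQ_pos ha (n + 1)).le
  have h1 : (convQ a n : ℝ) ≤ convQ a (n + 2) := by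
    exact_mod_cast (convQ_le_convQ_succ ha n).trans (convQ_le_convQ_succ ha (n + 1))
  rw [mul_comm]
  exact mul_le_mul_of_nonneg_left h1 h0

variable {ξ : ℝ} (hξ : IsCFValue a ξ)
include hξ

theorem abs_sub_convergent_le (n : ℕ) :
    |ξ - convergent a n| ≤ ((convQ a n : ℝ) * convQ a (n + 1))⁻¹ := by
  have hmem := mem_uIcc_of_tendsto_of_sub_eq_neg_one_pow_mul
    (antitone_inv_convQ_mul_convQ_succ ha) (convergent_succ_sub_convergent ha) hξ n
  exact (Set.abs_sub_left_of_mem_uIcc hmem).trans_eq (abs_convergent_succ_sub_convergent ha n)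

theorem ne_convergent (n : ℕ) : ξ ≠ convergent a n := by
  intro h
  have hq : convQ a n < convQ a (n + 2) := by
    rw [convQ.eq_3]
    nlinarith [ha (n + 1), one_le_convQ ha (n + 1)]
  have hlt : ((convQ a (n + 1) : ℝ) * convQ a (n + 2))⁻¹ <
      ((convQ a n : ℝ) * convQ a (n + 1))⁻¹ := by
    refine inv_strictAnti₀ (convQ_mul_convQ_succ_pos ha n) ?_
    rw [mul_comm]
    exact mul_lt_mul_of_pos_left (Int.cast_lt.2 hq) (Int.cast_pos.2 (convQ_pos ha (n + 1)))
  have hle := abs_sub_convergent_le ha hξ (n + 1)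
  rw [h, abs_sub_comm, abs_convergent_succ_sub_convergent ha] at hle
  exact hle.not_gt hlt

theorem liouville_of_frequently_convQ_pow_le
    (h : ∀ n : ℕ, ∃ᶠ N in atTop, convQ a N ^ n ≤ a (N + 1)) : Liouville ξ := by
  intro n
  obtain ⟨N, hN, hN2⟩ := ((h n).and_eventually (eventually_ge_atTop 2)).exists
  have hq : 1 < convQ a N := by have := natCast_le_convQ ha N; omega
  refine ⟨convP a N, convQ a N, hq, ne_convergent ha hξ N,
    (abs_sub_convergent_le ha hξ N).trans_lt ?_⟩
  have hpow : convQ a N ^ n < convQ a N * convQ a (N + 1) :=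
    calc convQ a N ^ n < convQ a N * convQ a N ^ n := lt_mul_left (by positivity) hq
      _ ≤ convQ a N * (a (N + 1) * convQ a N) :=
        mul_le_mul_of_nonneg_left
          (hN.trans (le_mul_of_one_le_right (by linarith [ha N]) hq.le)) (by omega)
      _ ≤ convQ a N * convQ a (N + 1) :=
        mul_le_mul_of_nonneg_left (mul_convQ_le_convQ_succ ha N) (by omega)
  rw [one_div]
  exact inv_strictAnti₀ (by positivity) (by exact_mod_cast hpow)

end Convergents

section QuasiPeriodic

variable {b lam : ℕ → ℕ} {a : ℕ → ℤ}

theorem le_sum_range_of_pos (hlam : ∀ n, 0 < lam n) (j : ℕ) : j ≤ ∑ k ∈ range j, lam k := by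
  simpa using card_nsmul_le_sum (range j) lam 1 fun k _ => hlam k

theorem tendsto_sum_lam_mul_log (hlam : ∀ n, 0 < lam n) (hbtop : Tendsto b atTop atTop) :
    Tendsto (fun j => ∑ k ∈ range (j + 1), (lam k : ℝ) * Real.log (b k)) atTop atTop := by
  refine tendsto_atTop_mono (fun j => ?_)
    (Real.tendsto_log_atTop.comp (tendsto_natCast_atTop_atTop.comp hbtop))
  calc Real.log (b j) ≤ lam j * Real.log (b j) :=
        le_mul_of_one_le_left (Real.log_natCast_nonneg _) (by exact_mod_cast hlam j)
    _ ≤ _ := single_le_sum (f := fun k => (lam k : ℝ) * Real.log (b k))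
        (fun k _ => mul_nonneg (Nat.cast_nonneg _) (Real.log_natCast_nonneg _))
        (self_mem_range_succ j)

theorem eventually_sum_lam_mul_log_two_mul_le (hlam : ∀ n, 0 < lam n)
    (hbtop : Tendsto b atTop atTop) :
    ∀ᶠ j in atTop, ∑ k ∈ range (j + 1), (lam k : ℝ) * Real.log (2 * b k) ≤
      3 * ∑ k ∈ range (j + 1), (lam k : ℝ) * Real.log (b k) := by
  obtain ⟨K, hK⟩ := eventually_atTop.1 (hbtop.eventually_ge_atTop 2)
  set f : ℕ → ℝ := fun k => lam k * (Real.log (2 * b k) - 2 * Real.log (b k))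
  -- `2 * b ≤ b ^ 2` once `b ≥ 2`
  have hf : ∀ k ≥ K, f k ≤ 0 := fun k hk => by
    have h2 : (2 : ℝ) ≤ b k := by exact_mod_cast hK k hk
    have : Real.log (2 * b k) ≤ 2 * Real.log (b k) := by
      rw [← Real.log_rpow (by linarith)]
      exact Real.log_le_log (by positivity) (by norm_num; nlinarith)
    exact mul_nonpos_of_nonneg_of_nonpos (Nat.cast_nonneg _) (by linarith)
  filter_upwards [eventually_ge_atTop K,
    (tendsto_sum_lam_mul_log hlam hbtop).eventually_ge_atTop (∑ k ∈ range K, f k)] with j hj hT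
  have hsplit : ∑ k ∈ range (j + 1), (lam k : ℝ) * Real.log (2 * b k) =
      ∑ k ∈ range (j + 1), f k + 2 * ∑ k ∈ range (j + 1), (lam k : ℝ) * Real.log (b k) := by
    rw [mul_sum, ← sum_add_distrib]
    exact sum_congr rfl fun k _ => by ring
  linarith [sum_range_le_sum_range_of_nonpos hf (Nat.le_succ_of_le hj)]

variable (hblock : ∀ j i : ℕ, (∑ k ∈ range j, lam k) < i →
  i ≤ ∑ k ∈ range (j + 1), lam k → a i = (b j : ℤ))
include hblock

theorem one_le_of_block (hb : ∀ n, 0 < b n) (hlam : ∀ n, 0 < lam n) (i : ℕ) :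
    1 ≤ a (i + 1) := by
  obtain ⟨j, hj, hj'⟩ := exists_lt_le_succ_of_le (S := fun j => ∑ k ∈ range j, lam k) (by simp)
    (Nat.succ_pos i) (le_sum_range_of_pos hlam (i + 1))
  rw [hblock j (i + 1) hj hj']
  exact_mod_cast hb j

theorem a_sum_range_succ_add_one (hlam : ∀ n, 0 < lam n) (j : ℕ) :
    a (∑ k ∈ range (j + 1), lam k + 1) = b (j + 1) :=
  hblock (j + 1) _ (Nat.lt_succ_self _) <| by
    rw [sum_range_succ _ (j + 1)]
    have := hlam (j + 1)
    omega

theorem sum_blocks_eq_sum_lam_mul (g : ℤ → ℝ) (j : ℕ) :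
    ∑ i ∈ range (∑ k ∈ range j, lam k), g (a (i + 1)) = ∑ k ∈ range j, lam k * g (b k) := by
  induction j with
  | zero => simp
  | succ j ih =>
    rw [sum_range_succ lam, sum_range_add, ih, sum_range_succ]
    congr 1
    rw [sum_congr rfl fun i hi => by
      rw [hblock j _ (by omega) (by rw [sum_range_succ]; have := mem_range.1 hi; omega)],
      sum_const, card_range, nsmul_eq_mul]

theorem log_convQ_sum_range_le (hb : ∀ n, 0 < b n) (hlam : ∀ n, 0 < lam n) (j : ℕ) :
    Real.log (convQ a (∑ k ∈ range j, lam k)) ≤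
      ∑ k ∈ range j, (lam k : ℝ) * Real.log (2 * b k) := by
  set N := ∑ k ∈ range j, lam k
  have ha := one_le_of_block hblock hb hlam
  have hpos (i : ℕ) : (0 : ℝ) < 2 * a (i + 1) := by have := ha i; positivity
  have hq : (convQ a N : ℝ) ≤ ∏ i ∈ range N, 2 * (a (i + 1) : ℝ) := by
    exact_mod_cast convQ_le_prod ha N
  calc Real.log (convQ a N)
      ≤ Real.log (∏ i ∈ range N, 2 * (a (i + 1) : ℝ)) :=
        Real.log_le_log (Int.cast_pos.2 (convQ_pos ha N)) hq
    _ = ∑ i ∈ range N, Real.log (2 * (a (i + 1) : ℝ)) :=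
        Real.log_prod fun i _ => (hpos i).ne'
    _ = ∑ k ∈ range j, (lam k : ℝ) * Real.log (2 * b k) := by
        simpa using sum_blocks_eq_sum_lam_mul hblock (fun x => Real.log (2 * (x : ℝ))) j

theorem eventually_convQ_pow_lt (hb : ∀ n, 0 < b n) (hlam : ∀ n, 0 < lam n)
    (hbtop : Tendsto b atTop atTop)
    (hgrow : Tendsto (fun n => Real.log (b (n + 1)) /
      ∑ k ∈ range (n + 1), (lam k : ℝ) * Real.log (b k)) atTop atTop) (n : ℕ) :
    ∀ᶠ j in atTop, convQ a (∑ k ∈ range (j + 1), lam k) ^ n < b (j + 1) := by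
  filter_upwards [eventually_sum_lam_mul_log_two_mul_le hlam hbtop,
    (tendsto_sum_lam_mul_log hlam hbtop).eventually_gt_atTop 0,
    hgrow.eventually_ge_atTop (3 * (n + 1))] with j hU hT hR
  set T := ∑ k ∈ range (j + 1), (lam k : ℝ) * Real.log (b k)
  set q := convQ a (∑ k ∈ range (j + 1), lam k)
  have hq : (0 : ℝ) < q := Int.cast_pos.2 (convQ_pos (one_le_of_block hblock hb hlam) _)
  have hlog : n * Real.log q < Real.log (b (j + 1)) :=
    calc n * Real.log q ≤ n * (3 * T) :=
          mul_le_mul_of_nonneg_left ((log_convQ_sum_range_le hblock hb hlam _).trans hU)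
            (Nat.cast_nonneg _)
      _ < 3 * (n + 1) * T := by nlinarith
      _ ≤ Real.log (b (j + 1)) := (le_div_iff₀ hT).1 hR
  have : (q : ℝ) ^ n < b (j + 1) := by
    rwa [← Real.log_lt_log_iff (by positivity) (by exact_mod_cast hb (j + 1)), Real.log_pow]
  exact_mod_cast this

end QuasiPeriodic

theorem quasiPeriodic_liouville_general
    (b lam : ℕ → ℕ) (hb : ∀ n, 0 < b n) (hlam : ∀ n, 0 < lam n)
    (hbtop : Filter.Tendsto b Filter.atTop Filter.atTop)
    (hgrow : Filter.Tendsto (fun n => Real.log (b (n + 1)) /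
        ∑ k ∈ Finset.range (n + 1), (lam k : ℝ) * Real.log (b k))
      Filter.atTop Filter.atTop)
    (a : ℕ → ℤ)
    (hblock : ∀ j i : ℕ, (∑ k ∈ Finset.range j, lam k) < i →
      i ≤ ∑ k ∈ Finset.range (j + 1), lam k → a i = (b j : ℤ))
    (ξ : ℝ) (hξ : IsCFValue a ξ)
    : Liouville ξ := by
  refine liouville_of_frequently_convQ_pow_le (one_le_of_block hblock hb hlam) hξ fun n => ?_
  have hN : Tendsto (fun j => ∑ k ∈ range (j + 1), lam k) atTop atTop :=
    tendsto_atTop_mono (fun j => le_sum_range_of_pos hlam (j + 1)) (tendsto_add_atTop_nat 1)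
  refine hN.frequently (Eventually.frequently ?_)
  filter_upwards [eventually_convQ_pow_lt hblock hb hlam hbtop hgrow n] with j hj
  rw [a_sum_range_succ_add_one hblock hlam j]
  exact_mod_cast hj.le

/-- Let `(b n)`, `(lam n)` be positive integer sequences with `b n → ∞`, `lam n → ∞`, and
`log (b (n+1)) / (∑_{k=0}^n lam k * log (b k)) → ∞`. Then the quasi-periodic continued
fraction `ξ = [0; b 0 ^ (lam 0), b 1 ^ (lam 1), …]` (each `b k` repeated `lam k` times)
is a Liouville number. -/
theorem quasiPeriodic_liouville
    (b lam : ℕ → ℕ) (hb : ∀ n, 0 < b n) (hlam : ∀ n, 0 < lam n)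
    (hbtop : Filter.Tendsto b Filter.atTop Filter.atTop)
    (hlamtop : Filter.Tendsto lam Filter.atTop Filter.atTop)
    (hgrow : Filter.Tendsto (fun n => Real.log (b (n + 1)) /
        ∑ k ∈ Finset.range (n + 1), (lam k : ℝ) * Real.log (b k))
      Filter.atTop Filter.atTop)
    (a : ℕ → ℤ) (ha0 : a 0 = 0)
    (hblock : ∀ j i : ℕ, (∑ k ∈ Finset.range j, lam k) < i →
      i ≤ ∑ k ∈ Finset.range (j + 1), lam k → a i = (b j : ℤ))
    (ξ : ℝ) (hξ : IsCFValue a ξ)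
    : Liouville ξ :=
  quasiPeriodic_liouville_general b lam hb hlam hbtop hgrow a hblock ξ hξ
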